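/- arXiv:2108.08185 — 2 statements merged into one kernel-verified Lean document; each statement's English description precedes it below -/
import Mathlib

section
/- Let E and K be complex Hilbert spaces, let B be a closed operator in E (from E to E) and let T be a closed operator from E to K. Let A denote the restriction of B to dom(B) ∩ dom(T), i.e. dom(A) = dom(B) ∩ dom(T) and Af = Bf. Suppose there are a constant c > 0 and a sequence (f_n) with f_n ∈ dom(B) ∩ dom(T) for all n, such that ‖f_n‖² + ‖Bf_n‖² → 0 as n → ∞ while ‖Tf_n‖ ≥ c for all n. Then A is not closed. -/
open LinearPMap Filter

/-- Let `E` and `K` be complex Hilbert spaces, `B` a closed operator in `E` and `T` a closed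
operator from `E` to `K`, and let `A` be the restriction of `B` to `dom B ∩ dom T`. If there are
`c > 0` and a sequence `(f n)` in `dom B ∩ dom T` with `‖f n‖² + ‖B (f n)‖² → 0` while
`‖T (f n)‖ ≥ c` for all `n`, then `A` is not closed. -/
theorem restriction_not_closed_of_seq
    {E K : Type*} [NormedAddCommGroup E] [InnerProductSpace ℂ E] [CompleteSpace E]
    [NormedAddCommGroup K] [InnerProductSpace ℂ K] [CompleteSpace K]
    (B : E →ₗ.[ℂ] E) (hB : B.IsClosed) (T : E →ₗ.[ℂ] K) (hT : T.IsClosed)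
    (c : ℝ) (hc : 0 < c) (f : ℕ → E)
    (hfB : ∀ n, f n ∈ B.domain) (hfT : ∀ n, f n ∈ T.domain)
    (htend : Tendsto (fun n => ‖f n‖ ^ 2 + ‖B ⟨f n, hfB n⟩‖ ^ 2) atTop (nhds 0))
    (hlow : ∀ n, c ≤ ‖T ⟨f n, hfT n⟩‖) :
    ¬(B.domRestrict T.domain).IsClosed := by
  intro hA
  set A := B.domRestrict T.domain with hAdef
  -- the graph of `A` is a closed, hence complete, subspace of `E × E`
  haveI : CompleteSpace A.graph := completeSpace_coe_iff_isComplete.mpr hA.isComplete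
  -- every element of the graph of `A` has first component in `T.domain`
  have hmemT : ∀ p : A.graph, (p : E × E).1 ∈ T.domain := by
    intro p
    have h : ((p : E × E).1, (p : E × E).2) ∈ A.graph := by simpa using p.2
    have h' := mem_domain_of_mem_graph h
    simp only [hAdef, domRestrict_domain, Submodule.mem_inf] at h'
    exact h'.1
  -- the linear map `(f, Af) ↦ T f` on the graph of `A`
  let S : A.graph →ₗ[ℂ] K :=
    { toFun := fun p => T ⟨(p : E × E).1, hmemT p⟩
      map_add' := by
        intro p q
        have h : (⟨((p + q : A.graph) : E × E).1, hmemT (p + q)⟩ : T.domain)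
            = ⟨(p : E × E).1, hmemT p⟩ + ⟨(q : E × E).1, hmemT q⟩ := rfl
        show T ⟨((p + q : A.graph) : E × E).1, hmemT (p + q)⟩
          = T ⟨(p : E × E).1, hmemT p⟩ + T ⟨(q : E × E).1, hmemT q⟩
        rw [h, T.map_add]
      map_smul' := by
        intro a p
        have h : (⟨((a • p : A.graph) : E × E).1, hmemT (a • p)⟩ : T.domain)
            = a • ⟨(p : E × E).1, hmemT p⟩ := rfl
        show T ⟨((a • p : A.graph) : E × E).1, hmemT (a • p)⟩
          = (RingHom.id ℂ) a • T ⟨(p : E × E).1, hmemT p⟩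
        rw [h, T.map_smul]
        rfl }
  -- `S` is continuous by the closed graph theorem, since `T` is closed
  have hScont : Continuous S := by
    apply LinearMap.continuous_of_seq_closed_graph
    intro u x y hu hSu
    have hux : Tendsto (fun n => ((u n : E × E).1, S (u n))) atTop
        (nhds ((x : E × E).1, y)) := by
      refine Tendsto.prodMk_nhds ?_ hSu
      exact (continuous_fst.comp continuous_subtype_val).tendsto x |>.comp hu
    have hmem : ((x : E × E).1, y) ∈ T.graph := by
      refine hT.mem_of_tendsto hux (Eventually.of_forall fun n => ?_)
      exact T.mem_graph ⟨(u n : E × E).1, hmemT (u n)⟩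
    exact (image_iff (hmemT x)).mpr hmem
  -- the sequence in the graph of `A`
  have hGmem : ∀ n, ((f n, B ⟨f n, hfB n⟩) : E × E) ∈ A.graph := by
    intro n
    have hd : f n ∈ A.domain := by
      rw [hAdef, domRestrict_domain]
      exact ⟨hfT n, hfB n⟩
    have : A ⟨f n, hd⟩ = B ⟨f n, hfB n⟩ := domRestrict_apply rfl
    simpa [this] using A.mem_graph ⟨f n, hd⟩
  set g : ℕ → A.graph := fun n => ⟨(f n, B ⟨f n, hfB n⟩), hGmem n⟩ with hg
  -- the sequence tends to `0` in the graph norm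
  have hsq : Tendsto (fun n => Real.sqrt (‖f n‖ ^ 2 + ‖B ⟨f n, hfB n⟩‖ ^ 2)) atTop (nhds 0) := by
    simpa [Function.comp_def] using (Real.continuous_sqrt.tendsto 0).comp htend
  have key : ∀ a b : ℝ, 0 ≤ a → a ≤ Real.sqrt (a ^ 2 + b ^ 2) := by
    intro a b ha
    nlinarith [Real.sq_sqrt (show (0:ℝ) ≤ a ^ 2 + b ^ 2 by positivity),
      Real.sqrt_nonneg (a ^ 2 + b ^ 2)]
  have hf0 : Tendsto (fun n => f n) atTop (nhds 0) := by
    rw [tendsto_zero_iff_norm_tendsto_zero]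
    exact squeeze_zero (fun n => norm_nonneg _) (fun n => key _ _ (norm_nonneg _)) hsq
  have hB0 : Tendsto (fun n => B ⟨f n, hfB n⟩) atTop (nhds 0) := by
    rw [tendsto_zero_iff_norm_tendsto_zero]
    refine squeeze_zero (fun n => norm_nonneg _) (fun n => ?_) hsq
    rw [add_comm]
    exact key _ _ (norm_nonneg _)
  have hg0 : Tendsto g atTop (nhds 0) := by
    rw [tendsto_subtype_rng]
    exact hf0.prodMk_nhds hB0
  -- hence `T (f n) = S (g n) → 0`, contradicting `c ≤ ‖T (f n)‖`
  have hSg : Tendsto (fun n => S (g n)) atTop (nhds 0) := by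
    simpa [Function.comp_def] using (hScont.tendsto 0).comp hg0
  have hSgval : ∀ n, S (g n) = T ⟨f n, hfT n⟩ := fun n => rfl
  have hTn : Tendsto (fun n => ‖T ⟨f n, hfT n⟩‖) atTop (nhds 0) := by
    simpa [hSgval] using hSg.norm
  have : c ≤ 0 := ge_of_tendsto hTn (Eventually.of_forall hlow)
  linarith
end

section
/- Let E be a complex Hilbert space, let A be a densely defined operator in E, and let S be a self-adjoint operator in E extending A (A ⊆ S and S* = S). Let z ∈ ℂ be such that the map u ↦ Su − z·u is a bijection from dom(S) onto E. Let B be an operator in E such that B ⊆ A*, dom(S) ⊆ dom(B), and every f ∈ dom(A*) with A*f = z·f belongs to dom(B). Then B = A*. -/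
open LinearPMap

/-- Let `E` be a complex Hilbert space, `A` a densely defined operator in `E` and `S` a
self-adjoint extension of `A`. Let `z ∈ ℂ` be such that `u ↦ S u - z u` is a bijection from
`dom S` onto `E`. If `B ⊆ A*`, `dom S ⊆ dom B`, and every `f ∈ dom A*` with `A* f = z f`
belongs to `dom B`, then `B = A*`. -/
theorem eq_adjoint_of_resolvent_decomposition
    {E : Type*} [NormedAddCommGroup E] [InnerProductSpace ℂ E] [CompleteSpace E]
    (A S B : E →ₗ.[ℂ] E) (hAdense : Dense (A.domain : Set E))
    (hAS : A ≤ S) (hSsa : S† = S) (z : ℂ)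
    (hbij : Function.Bijective (fun u : S.domain => S u - z • (u : E)))
    (hBA : B ≤ A†) (hSB : S.domain ≤ B.domain)
    (hker : ∀ (x : E) (hx : x ∈ (A†).domain), (A†) ⟨x, hx⟩ = z • x → x ∈ B.domain) :
    B = A† := by
  have hsub : (A.domain : Set E) ⊆ (S.domain : Set E) := fun x hx => hAS.1 hx
  have hSdense : Dense (S.domain : Set E) := hAdense.mono hsub
  -- S is self-adjoint, hence a formal adjoint of itself
  have hSS : S.IsFormalAdjoint S := by
    have := LinearPMap.adjoint_isFormalAdjoint hSdense (T := S)
    rwa [hSsa] at this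
  -- A ≤ S so S is a formal adjoint of A
  have hformal : A.IsFormalAdjoint S := by
    intro x y
    have hx : (x : E) ∈ S.domain := hAS.1 x.2
    have hAx : A x = S ⟨x, hx⟩ := hAS.2 rfl
    rw [hAx]
    exact hSS ⟨x, hx⟩ y
  have hSA : S ≤ A† := hformal.le_adjoint hAdense
  -- domain inclusion A†.domain ≤ B.domain
  have hdom : (A†).domain ≤ B.domain := by
    intro f hf
    obtain ⟨u, hu⟩ := hbij.2 ((A†) ⟨f, hf⟩ - z • f)
    simp only at hu
    have huA : (u : E) ∈ (A†).domain := hSA.1 u.2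
    have hgA : f - (u : E) ∈ (A†).domain := Submodule.sub_mem _ hf huA
    have hAu : (A†) ⟨(u : E), huA⟩ = S u := (hSA.2 rfl).symm
    have hval : (A†) ⟨f - (u : E), hgA⟩ = z • (f - (u : E)) := by
      have : (⟨f - (u : E), hgA⟩ : (A†).domain) = ⟨f, hf⟩ - ⟨(u : E), huA⟩ := rfl
      rw [this, LinearPMap.map_sub, hAu, smul_sub]
      have hSu : S u = ((A†) ⟨f, hf⟩ - z • f) + z • (u : E) := by
        rw [← hu]; abel
      rw [hSu]; abel
    have hgB : f - (u : E) ∈ B.domain := hker _ hgA hval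
    have : (f - (u : E)) + (u : E) ∈ B.domain :=
      Submodule.add_mem _ hgB (hSB u.2)
    simpa using this
  -- antisymmetry
  refine le_antisymm hBA ⟨hdom, ?_⟩
  intro x y hxy
  exact (hBA.2 hxy.symm).symm
end
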